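/- Let r_{cn}(z) = (1 − z/2)/(1 + z/2). For every δ₁ ∈ (0, π/2) there exist constants c, C, R > 0 such that for all natural n ≥ 1 and all z with |arg z| ≤ δ₁ and |z| ≥ R, the bound |e^{−nz} − r_{cn}(z)ⁿ| ≤ C e^{−c n / |z|} holds. -/

import Mathlib

open Real

/-!
No cancellation between the two terms is needed: each of them is already small.
In the sector `|arg z| ≤ δ₁` we have `Re z ≥ |z| cos δ₁`, so `|e^{-nz}| ≤ e^{-n |z| cos δ₁}`,
which is at most `e^{-n cos δ₁ / |z|}` once `|z| ≥ 1`. For the rational function,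
`|r_cn(z)|² = (m - Re z) / (m + Re z)` with `m = 1 + |z|²/4`, and `1 + t ≤ e^t` bounds this by
`exp (-2 Re z / (m + Re z)) ≤ exp (-2 cos δ₁ / |z|)` once `|z| ≥ 2`.
The triangle inequality then gives the claim with `c = cos δ₁`, `C = 2`, `R = 2`.
-/

noncomputable def crankNicolson (z : ℂ) : ℂ := (1 - z / 2) / (1 + z / 2)

lemma Complex.norm_mul_cos_le_re_of_abs_arg_le {z : ℂ} {δ : ℝ} (hδ : δ ≤ π)
    (harg : |z.arg| ≤ δ) : ‖z‖ * Real.cos δ ≤ z.re := by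
  have hcos : Real.cos δ ≤ Real.cos z.arg := by
    rw [← Real.cos_abs z.arg]
    exact Real.cos_le_cos_of_nonneg_of_le_pi (abs_nonneg _) hδ harg
  calc ‖z‖ * Real.cos δ ≤ ‖z‖ * Real.cos z.arg := mul_le_mul_of_nonneg_left hcos (norm_nonneg z)
    _ = z.re := Complex.norm_mul_cos_arg z

lemma sq_norm_crankNicolson (z : ℂ) :
    ‖crankNicolson z‖ ^ 2 = (1 + ‖z‖ ^ 2 / 4 - z.re) / (1 + ‖z‖ ^ 2 / 4 + z.re) := by
  have hnum : Complex.normSq (1 - z / 2) = 1 + ‖z‖ ^ 2 / 4 - z.re := by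
    simp only [Complex.sq_norm, Complex.normSq_apply, Complex.sub_re, Complex.sub_im,
      Complex.div_re, Complex.div_im, Complex.one_re, Complex.one_im,
      Complex.re_ofNat, Complex.im_ofNat]
    ring
  have hden : Complex.normSq (1 + z / 2) = 1 + ‖z‖ ^ 2 / 4 + z.re := by
    simp only [Complex.sq_norm, Complex.normSq_apply, Complex.add_re, Complex.add_im,
      Complex.div_re, Complex.div_im, Complex.one_re, Complex.one_im,
      Complex.re_ofNat, Complex.im_ofNat]
    ring
  rw [crankNicolson, Complex.sq_norm, Complex.normSq_div, hnum, hden]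

lemma sub_div_add_le_exp {m x : ℝ} (h : 0 < m + x) :
    (m - x) / (m + x) ≤ exp (-(2 * x / (m + x))) := by
  have heq : (m - x) / (m + x) = -(2 * x / (m + x)) + 1 := by
    field_simp
    ring
  rw [heq]
  exact add_one_le_exp _

lemma norm_crankNicolson_le_exp {z : ℂ} {c : ℝ} (hc : 0 ≤ c) (hre : ‖z‖ * c ≤ z.re)
    (hz : 2 ≤ ‖z‖) : ‖crankNicolson z‖ ≤ exp (-(c / ‖z‖)) := by
  set A := ‖z‖
  have hA : 0 < A := by linarith
  have hx : 0 ≤ z.re := le_trans (by positivity) hre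
  have hm : 0 < 1 + A ^ 2 / 4 + z.re := by positivity
  have hexp : -(2 * z.re / (1 + A ^ 2 / 4 + z.re)) ≤ -(2 * c / A) := by
    rw [neg_le_neg_iff, div_le_div_iff₀ hA hm]
    -- `c (1 + A/2)² ≤ c A² ≤ A Re z`, using `Re z ≤ A` and `A ≥ 2`
    nlinarith [Complex.re_le_norm z, mul_le_mul_of_nonneg_left hre hA.le,
      mul_nonneg hc (mul_nonneg (sub_nonneg.2 hz) (by linarith : (0 : ℝ) ≤ 3 * A + 2))]
  refine (pow_le_pow_iff_left₀ (norm_nonneg _) (exp_pos _).le two_ne_zero).mp ?_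
  calc ‖crankNicolson z‖ ^ 2 = (1 + A ^ 2 / 4 - z.re) / (1 + A ^ 2 / 4 + z.re) :=
        sq_norm_crankNicolson z
    _ ≤ exp (-(2 * z.re / (1 + A ^ 2 / 4 + z.re))) := sub_div_add_le_exp hm
    _ ≤ exp (-(2 * c / A)) := exp_le_exp.mpr hexp
    _ = exp (-(c / A)) ^ 2 := by rw [← exp_nat_mul]; ring_nf

lemma norm_crankNicolson_pow_le_exp {z : ℂ} {c : ℝ} (hc : 0 ≤ c) (hre : ‖z‖ * c ≤ z.re)
    (hz : 2 ≤ ‖z‖) (n : ℕ) : ‖crankNicolson z ^ n‖ ≤ exp (-(c * n / ‖z‖)) := by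
  calc ‖crankNicolson z ^ n‖ ≤ exp (-(c / ‖z‖)) ^ n := by
        rw [norm_pow]
        exact pow_le_pow_left₀ (norm_nonneg _) (norm_crankNicolson_le_exp hc hre hz) n
    _ = exp (-(c * n / ‖z‖)) := by rw [← exp_nat_mul]; ring_nf

lemma norm_exp_neg_nat_mul_le_exp {z : ℂ} {c : ℝ} (hc : 0 ≤ c) (hre : ‖z‖ * c ≤ z.re)
    (hz : 1 ≤ ‖z‖) (n : ℕ) : ‖Complex.exp (-(n : ℂ) * z)‖ ≤ exp (-(c * n / ‖z‖)) := by
  have hcz : c / ‖z‖ ≤ z.re := by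
    calc c / ‖z‖ ≤ c := div_le_self hc hz
      _ ≤ ‖z‖ * c := le_mul_of_one_le_left hc hz
      _ ≤ z.re := hre
  rw [Complex.norm_exp, exp_le_exp]
  have hre' : (-(n : ℂ) * z).re = -(n * z.re) := by simp
  rw [hre', neg_le_neg_iff, mul_div_right_comm, mul_comm _ (n : ℝ)]
  exact mul_le_mul_of_nonneg_left hcz n.cast_nonneg

/-- Crank–Nicolson error bound far from the origin: there exist `c, C, R > 0`
such that for `|arg z| ≤ δ₁ < π/2` and `|z| ≥ R`,
`|e^{-nz} - r_cn(z)ⁿ| ≤ C e^{-cn/|z|}` where `r_cn(z) = (1 - z/2)/(1 + z/2)`. -/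
theorem crank_nicolson_bound_large_z
    (δ₁ : ℝ) (hδ : δ₁ ∈ Set.Ioo 0 (π / 2)) :
    ∃ c > (0 : ℝ), ∃ C > (0 : ℝ), ∃ R > (0 : ℝ), ∀ n : ℕ, 1 ≤ n → ∀ z : ℂ,
      |z.arg| ≤ δ₁ → R ≤ ‖z‖ →
      ‖Complex.exp (-(n : ℂ) * z) - ((1 - z / 2) / (1 + z / 2)) ^ n‖ ≤
        C * Real.exp (-(c * n / ‖z‖)) := by
  obtain ⟨hδ0, hδπ⟩ := hδ
  have hcos : 0 < cos δ₁ := cos_pos_of_mem_Ioo ⟨by linarith [pi_pos], hδπ⟩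
  refine ⟨cos δ₁, hcos, 2, two_pos, 2, two_pos, fun n _ z harg hz => ?_⟩
  have hre : ‖z‖ * cos δ₁ ≤ z.re :=
    Complex.norm_mul_cos_le_re_of_abs_arg_le (by linarith [pi_pos]) harg
  calc ‖Complex.exp (-(n : ℂ) * z) - crankNicolson z ^ n‖
      ≤ ‖Complex.exp (-(n : ℂ) * z)‖ + ‖crankNicolson z ^ n‖ := norm_sub_le _ _
    _ ≤ exp (-(cos δ₁ * n / ‖z‖)) + exp (-(cos δ₁ * n / ‖z‖)) :=
        add_le_add (norm_exp_neg_nat_mul_le_exp hcos.le hre (by linarith) n)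
          (norm_crankNicolson_pow_le_exp hcos.le hre hz n)
    _ = 2 * exp (-(cos δ₁ * n / ‖z‖)) := by ring
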